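/- arXiv:2405.04882 — 2 statements merged into one kernel-verified Lean document; each statement's English description precedes it below -/
import Mathlib

section
/- Let n ≥ 1 and let k, l be integers with 1 ≤ l < k ≤ n. Then for every λ ∈ Γ_k one has k(n−l+1)σ_k(λ)σ_{l−1}(λ) ≤ l(n−k+1)σ_{k−1}(λ)σ_l(λ). -/
/-- The `m`-th elementary symmetric polynomial of `lam : Fin n → ℝ`. -/
noncomputable def esymm (n m : ℕ) (lam : Fin n → ℝ) : ℝ :=
  ∑ s ∈ Finset.univ.powersetCard m, ∏ i ∈ s, lam i

/-- `σ_{l-1}` with the convention `σ_{-1} = 0`. -/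
noncomputable def esymmPred (n l : ℕ) (lam : Fin n → ℝ) : ℝ :=
  if l = 0 then 0 else esymm n (l - 1) lam

/-- The Gårding cone `Γ_k`. -/
def GammaK (n k : ℕ) : Set (Fin n → ℝ) :=
  {lam | ∀ j, 1 ≤ j → j ≤ k → 0 < esymm n j lam}

/-- `G^{jj} = ∂(σ_k/σ_l)/∂λ_j`. -/
noncomputable def Gjj (n k l : ℕ) (lam : Fin n → ℝ) (j : Fin n) : ℝ :=
  (esymm n (k - 1) (Function.update lam j 0) * esymm n l lam
      - esymm n k lam * esymmPred n l (Function.update lam j 0)) / (esymm n l lam) ^ 2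

/-- `F^{ii} = θ Σ_j G^{jj} − μ G^{ii}`. -/
noncomputable def Fii (n k l : ℕ) (θ μ : ℝ) (lam : Fin n → ℝ) (i : Fin n) : ℝ :=
  θ * ∑ j, Gjj n k l lam j - μ * Gjj n k l lam i

/-- Gradient vector of `u` at `x`. -/
noncomputable def pgrad (n : ℕ) (u : (Fin n → ℝ) → ℝ) (x : Fin n → ℝ) : Fin n → ℝ :=
  fun i => fderiv ℝ u x (Pi.single i 1)

/-- Hessian matrix of `u` at `x`. -/
noncomputable def hessMat (n : ℕ) (u : (Fin n → ℝ) → ℝ) (x : Fin n → ℝ) :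
    Matrix (Fin n) (Fin n) ℝ :=
  Matrix.of fun i j => iteratedFDeriv ℝ 2 u x ![Pi.single i 1, Pi.single j 1]

/-- Hessian matrix of `u` at `x` computed with derivatives within `s`. -/
noncomputable def hessMatWithin (n : ℕ) (u : (Fin n → ℝ) → ℝ) (s : Set (Fin n → ℝ))
    (x : Fin n → ℝ) : Matrix (Fin n) (Fin n) ℝ :=
  Matrix.of fun i j => iteratedFDerivWithin ℝ 2 u s x ![Pi.single i 1, Pi.single j 1]

/-- `η[u] = (Δu) I − D²u`. -/
noncomputable def etaMat (n : ℕ) (u : (Fin n → ℝ) → ℝ) (x : Fin n → ℝ) :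
    Matrix (Fin n) (Fin n) ℝ :=
  Matrix.trace (hessMat n u x) • (1 : Matrix (Fin n) (Fin n) ℝ) - hessMat n u x

/-- Euclidean ball in `Fin n → ℝ`. -/
def EBall (n : ℕ) (c : Fin n → ℝ) (r : ℝ) : Set (Fin n → ℝ) :=
  {x | ∑ i, (x i - c i) ^ 2 < r ^ 2}

/-- `W = √(1+|Du|²)`. -/
noncomputable def Wgraph (n : ℕ) (u : (Fin n → ℝ) → ℝ) (x : Fin n → ℝ) : ℝ :=
  Real.sqrt (1 + ∑ i, (pgrad n u x i) ^ 2)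

/-- Matrix similar to `A = W⁻¹ g^{-1/2} D²u g^{-1/2}`, namely `W⁻¹ g⁻¹ D²u`. -/
noncomputable def shapeMat (n : ℕ) (u : (Fin n → ℝ) → ℝ) (x : Fin n → ℝ) :
    Matrix (Fin n) (Fin n) ℝ :=
  (Wgraph n u x)⁻¹ •
    ((1 + Matrix.vecMulVec (pgrad n u x) (pgrad n u x))⁻¹ * hessMat n u x)

/-!
Write `E_m = σ_m / C(n, m)` for the elementary symmetric means of a real multiset of size `n`.
Newton's inequality `E_m E_{m+2} ≤ E_{m+1}²` is proved by induction on `n`: by Rolle's theorem the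
derivative of `∏ (X - λᵢ)` has `n - 1` real roots, and these have the same means `E_0, …, E_{n-1}`.
This leaves the case `n = m + 2`, where passing to the reciprocals `λᵢ⁻¹` turns the claim into
`E_0 E_2 ≤ E_1²`, i.e. the Cauchy–Schwarz inequality. On `Γ_k` the means `E_0, …, E_{k-1}` are
positive, so log-concavity makes `E_{j+1} / E_j` nonincreasing for `j < k`; hence
`E_k E_{l-1} ≤ E_{k-1} E_l`, and `j C(n, j) = (n - j + 1) C(n, j - 1)` turns this into the claim.
-/

namespace Multiset

section CommSemiring

variable {R : Type*} [CommSemiring R]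

theorem esymm_zero (s : Multiset R) : s.esymm 0 = 1 := by
  simp [esymm]

theorem esymm_eq_zero_of_card_lt {s : Multiset R} {m : ℕ} (h : card s < m) : s.esymm m = 0 := by
  simp [esymm, powersetCard_eq_empty _ h]

theorem esymm_cons_succ (a : R) (s : Multiset R) (m : ℕ) :
    (a ::ₘ s).esymm (m + 1) = s.esymm (m + 1) + a * s.esymm m := by
  simp only [esymm, powersetCard_cons, map_add, sum_add, map_map, Function.comp_def, prod_cons,
    sum_map_mul_left]

theorem esymm_one (s : Multiset R) : s.esymm 1 = s.sum := by
  simp [esymm, powersetCard_one, map_map]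

theorem esymm_card (s : Multiset R) : s.esymm (card s) = s.prod := by
  induction s using Multiset.induction_on with
  | empty => simp [esymm_zero]
  | cons a s ih =>
    rw [card_cons, esymm_cons_succ, esymm_eq_zero_of_card_lt (Nat.lt_succ_self _), ih, prod_cons,
      zero_add]

theorem sum_sq_eq_sum_map_sq_add_two_mul_esymm_two (s : Multiset R) :
    s.sum ^ 2 = (s.map (· ^ 2)).sum + 2 * s.esymm 2 := by
  induction s using Multiset.induction_on with
  | empty => simp [esymm_eq_zero_of_card_lt (show card (0 : Multiset R) < 2 by simp)]
  | cons a s ih =>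
    rw [sum_cons, map_cons, sum_cons, esymm_cons_succ, esymm_one, add_sq, ih]
    ring

end CommSemiring

theorem esymm_map_inv_mul_prod {K : Type*} [Field K] (s : Multiset K) (hs : ∀ x ∈ s, x ≠ 0)
    {i j : ℕ} (h : card s = j + i) : (s.map (·⁻¹)).esymm j * s.prod = s.esymm i := by
  induction s using Multiset.induction_on generalizing i j with
  | empty =>
    obtain ⟨rfl, rfl⟩ : j = 0 ∧ i = 0 := by simp at h; omega
    simp [esymm_zero]
  | cons a s ih =>
    have ha : a ≠ 0 := hs a (mem_cons_self a s)
    have hs' : ∀ x ∈ s, x ≠ 0 := fun x hx => hs x (mem_cons_of_mem hx)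
    rw [card_cons] at h
    rw [map_cons, prod_cons]
    rcases j with _ | j
    · obtain rfl : i = card (a ::ₘ s) := by simp; omega
      rw [esymm_zero, one_mul, esymm_card, prod_cons]
    have expand (x y : K) : (x + a⁻¹ * y) * (a * s.prod) = a * (x * s.prod) + y * s.prod := by
      field_simp
    rw [esymm_cons_succ, expand]
    rcases i with _ | i
    · rw [esymm_eq_zero_of_card_lt (by simp; omega), ih hs' (show card s = j + 0 by omega),
        esymm_zero, esymm_zero]
      ring
    · rw [ih hs' (show card s = j + 1 + i by omega), ih hs' (show card s = j + (i + 1) by omega),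
        esymm_cons_succ]
      ring

theorem sq_sum_le_card_mul_sum_sq (s : Multiset ℝ) :
    s.sum ^ 2 ≤ card s * (s.map (· ^ 2)).sum := by
  have h : 0 ≤ (s.map fun x => (s.map fun y => (x - y) ^ 2).sum).sum :=
    sum_nonneg fun _ hx => by
      obtain ⟨x, -, rfl⟩ := mem_map.1 hx
      exact sum_nonneg fun _ hy => by obtain ⟨y, -, rfl⟩ := mem_map.1 hy; positivity
  have sum_map_mul (x : ℝ) : (s.map (fun y => x * y)).sum = x * s.sum := by
    rw [sum_map_mul_left, map_id']
  simp only [sub_sq, sum_map_add, sum_map_sub, map_const', sum_replicate, nsmul_eq_mul,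
    sum_map_mul_left, sum_map_mul_right, map_id', mul_assoc, sum_map_mul] at h
  linarith

open Polynomial in
theorem esymm_roots_derivative_prod_X_sub_C {s : Multiset ℝ} {n : ℕ} (hs : card s = n + 1) :
    card (derivative (s.map (X - C ·)).prod).roots = n ∧
      ∀ m ≤ n, (n + 1 : ℝ) * (derivative (s.map (X - C ·)).prod).roots.esymm m
        = (n + 1 - m) * s.esymm m := by
  set p := (s.map (X - C ·)).prod
  set q := derivative p
  have hp_deg : p.natDegree = n + 1 := by rw [natDegree_multiset_prod_X_sub_C_eq_card, hs]
  have hq_deg : q.natDegree ≤ n := (natDegree_derivative_le p).trans (by omega)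
  have hq_card : n ≤ card q.roots := by
    have : card p.roots ≤ card q.roots + 1 := card_roots_le_derivative p
    rw [roots_multiset_prod_X_sub_C, hs] at this
    omega
  have hq_split : card q.roots = q.natDegree := le_antisymm (card_roots' q) (by omega)
  have hq_deg' : q.natDegree = n := by omega
  have hq_coeff (j : ℕ) (hj : j ≤ n) :
      q.coeff j = (-1) ^ (n - j) * s.esymm (n - j) * (j + 1) := by
    rw [coeff_derivative, prod_X_sub_C_coeff s (by omega), hs, Nat.add_sub_add_right]
  have hq_lead : q.leadingCoeff = n + 1 := by
    rw [leadingCoeff, hq_deg', hq_coeff n le_rfl, Nat.sub_self, esymm_zero]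
    ring
  refine ⟨hq_split.trans hq_deg', fun m hm => ?_⟩
  have vieta := coeff_eq_esymm_roots_of_card hq_split (k := n - m) (by omega)
  rw [hq_coeff (n - m) (by omega), hq_lead, hq_deg', Nat.sub_sub_self hm,
    Nat.cast_sub hm] at vieta
  have hsign : ((-1 : ℝ) ^ m) ^ 2 = 1 := by rw [← pow_mul, mul_comm, pow_mul]; simp
  linear_combination
    -(-1) ^ m * vieta + ((n + 1 - m) * s.esymm m - (n + 1) * q.roots.esymm m) * hsign

noncomputable def esymmMean (s : Multiset ℝ) (m : ℕ) : ℝ :=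
  s.esymm m / (card s).choose m

theorem esymmMean_zero (s : Multiset ℝ) : s.esymmMean 0 = 1 := by
  simp [esymmMean, esymm_zero]

theorem esymm_eq_choose_mul_esymmMean (s : Multiset ℝ) {m : ℕ} (hm : m ≤ card s) :
    s.esymm m = (card s).choose m * s.esymmMean m := by
  have : ((card s).choose m : ℝ) ≠ 0 := by exact_mod_cast (Nat.choose_pos hm).ne'
  rw [esymmMean, mul_div_cancel₀ _ this]

theorem esymmMean_two_le_sq_esymmMean_one (s : Multiset ℝ) (hs : 2 ≤ card s) :
    s.esymmMean 2 ≤ s.esymmMean 1 ^ 2 := by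
  have hN : (2 : ℝ) ≤ card s := by exact_mod_cast hs
  have hsq := sum_sq_eq_sum_map_sq_add_two_mul_esymm_two s
  have hcs := sq_sum_le_card_mul_sum_sq s
  rw [esymmMean, esymmMean, Nat.cast_choose_two, Nat.choose_one_right, esymm_one, div_pow,
    div_le_div_iff₀ (by nlinarith) (by positivity)]
  nlinarith

theorem esymmMean_map_inv_mul_prod (s : Multiset ℝ) (hs : ∀ x ∈ s, x ≠ 0) {i j : ℕ}
    (h : card s = j + i) : (s.map (·⁻¹)).esymmMean j * s.prod = s.esymmMean i := by
  rw [esymmMean, esymmMean, card_map, div_mul_eq_mul_div, esymm_map_inv_mul_prod s hs h, h,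
    Nat.choose_symm_add]

theorem esymmMean_mul_esymmMean_le_sq_of_card_eq (s : Multiset ℝ) {m : ℕ}
    (h : card s = m + 2) : s.esymmMean m * s.esymmMean (m + 2) ≤ s.esymmMean (m + 1) ^ 2 := by
  by_cases h0 : (0 : ℝ) ∈ s
  · have : s.esymmMean (m + 2) = 0 := by
      rw [esymmMean, ← h, esymm_card, prod_eq_zero h0, zero_div]
    rw [this, mul_zero]
    positivity
  have hs : ∀ x ∈ s, x ≠ 0 := fun x hx hx0 => h0 (hx0 ▸ hx)
  have hinv := esymmMean_two_le_sq_esymmMean_one (s.map (·⁻¹)) (by simp [h])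
  rw [← esymmMean_map_inv_mul_prod s hs (by omega : card s = 2 + m),
    ← esymmMean_map_inv_mul_prod s hs (by omega : card s = 0 + (m + 2)),
    ← esymmMean_map_inv_mul_prod s hs (by omega : card s = 1 + (m + 1)), esymmMean_zero]
  nlinarith [sq_nonneg s.prod]

theorem exists_card_eq_esymmMean_eq {s : Multiset ℝ} {n : ℕ} (hs : card s = n + 1) :
    ∃ t : Multiset ℝ, card t = n ∧ ∀ m ≤ n, t.esymmMean m = s.esymmMean m := by
  obtain ⟨ht, hesymm⟩ := esymm_roots_derivative_prod_X_sub_C hs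
  refine ⟨_, ht, fun m hm => ?_⟩
  have hchoose : (n.choose m : ℝ) * (n + 1) = (n + 1).choose m * (n + 1 - m) := by
    have := congrArg (Nat.cast : ℕ → ℝ) (Nat.choose_mul_succ_eq n m)
    push_cast [Nat.cast_sub (by omega : m ≤ n + 1)] at this
    exact this
  have hC : (n.choose m : ℝ) ≠ 0 := by exact_mod_cast (Nat.choose_pos hm).ne'
  have hC' : ((n + 1).choose m : ℝ) ≠ 0 := by exact_mod_cast (Nat.choose_pos (by omega)).ne'
  have hnm : (n + 1 - m : ℝ) ≠ 0 := by
    have : (m : ℝ) ≤ n := by exact_mod_cast hm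
    linarith
  rw [esymmMean, esymmMean, ht, hs, div_eq_div_iff hC hC']
  refine mul_left_cancel₀ hnm ?_
  linear_combination (-(esymm _ m)) * hchoose + (n.choose m : ℝ) * hesymm m hm

theorem esymmMean_mul_esymmMean_le_sq (s : Multiset ℝ) {m : ℕ} (h : m + 2 ≤ card s) :
    s.esymmMean m * s.esymmMean (m + 2) ≤ s.esymmMean (m + 1) ^ 2 := by
  obtain ⟨d, hd⟩ := Nat.exists_eq_add_of_le h
  induction d generalizing s with
  | zero => exact esymmMean_mul_esymmMean_le_sq_of_card_eq s hd
  | succ d ih =>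
    obtain ⟨t, ht, hmean⟩ := exists_card_eq_esymmMean_eq (n := m + 2 + d) (by omega)
    rw [← hmean m (by omega), ← hmean (m + 1) (by omega), ← hmean (m + 2) (by omega)]
    exact ih t (by omega) ht

theorem succ_mul_esymm_eq (s : Multiset ℝ) {k : ℕ} (hk : k < card s) :
    (k + 1) * s.esymm (k + 1) = (card s - k) * ((card s).choose k * s.esymmMean (k + 1)) := by
  have hchoose := congrArg (Nat.cast : ℕ → ℝ) (Nat.choose_succ_right_eq (card s) k)
  push_cast [Nat.cast_sub hk.le] at hchoose
  rw [esymm_eq_choose_mul_esymmMean s hk]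
  linear_combination s.esymmMean (k + 1) * hchoose

theorem succ_mul_esymm_mul_esymm_le {s : Multiset ℝ} {k l : ℕ} (hk : k < card s)
    (hl : l < card s)
    (hmean : s.esymmMean (k + 1) * s.esymmMean l ≤ s.esymmMean k * s.esymmMean (l + 1)) :
    (k + 1) * (card s - l) * s.esymm (k + 1) * s.esymm l
      ≤ (l + 1) * (card s - k) * s.esymm k * s.esymm (l + 1) := by
  have hc : (0 : ℝ) ≤ (card s - k) * (card s - l) * (card s).choose k * (card s).choose l := by
    have : (k : ℝ) ≤ card s := by exact_mod_cast hk.le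
    have : (l : ℝ) ≤ card s := by exact_mod_cast hl.le
    have : (0 : ℝ) ≤ (card s - k) * (card s - l) := by nlinarith
    positivity
  calc (k + 1) * (card s - l) * s.esymm (k + 1) * s.esymm l
      = (card s - l) * s.esymm l * ((k + 1) * s.esymm (k + 1)) := by ring
    _ = ((card s - k) * (card s - l) * (card s).choose k * (card s).choose l) *
          (s.esymmMean (k + 1) * s.esymmMean l) := by
      rw [succ_mul_esymm_eq s hk, esymm_eq_choose_mul_esymmMean s hl.le]; ring
    _ ≤ ((card s - k) * (card s - l) * (card s).choose k * (card s).choose l) *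
          (s.esymmMean k * s.esymmMean (l + 1)) := mul_le_mul_of_nonneg_left hmean hc
    _ = (card s - k) * s.esymm k * ((l + 1) * s.esymm (l + 1)) := by
      rw [succ_mul_esymm_eq s hl, esymm_eq_choose_mul_esymmMean s hk.le]; ring
    _ = (l + 1) * (card s - k) * s.esymm k * s.esymm (l + 1) := by ring

end Multiset

theorem mul_le_mul_of_logConcave {f : ℕ → ℝ} {k : ℕ} (hpos : ∀ j ≤ k, 0 < f j)
    (hlc : ∀ j < k, f j * f (j + 2) ≤ f (j + 1) ^ 2) {l : ℕ} (hl : l ≤ k) :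
    f (k + 1) * f l ≤ f k * f (l + 1) := by
  induction k, hl using Nat.le_induction with
  | base => rw [mul_comm]
  | succ k hlk ih =>
    have ih := ih (fun j hj => hpos j (by omega)) (fun j hj => hlc j (by omega))
    have hk := hpos k (by omega)
    refine le_of_mul_le_mul_left ?_ hk
    calc f k * (f (k + 2) * f l)
        = (f k * f (k + 2)) * f l := by ring
      _ ≤ f (k + 1) ^ 2 * f l := by gcongr; exacts [(hpos l (by omega)).le, hlc k (by omega)]
      _ = f (k + 1) * (f (k + 1) * f l) := by ring
      _ ≤ f (k + 1) * (f k * f (l + 1)) := by gcongr; exact (hpos (k + 1) le_rfl).le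
      _ = f k * (f (k + 1) * f (l + 1)) := by ring

theorem stmt1_general (n k l : ℕ) (hl : 1 ≤ l) (hlk : l < k) (hkn : k ≤ n)
    (lam : Fin n → ℝ) (hlam : lam ∈ GammaK n k) :
    (k : ℝ) * ((n : ℝ) - (l : ℝ) + 1) * esymm n k lam * esymm n (l - 1) lam
      ≤ (l : ℝ) * ((n : ℝ) - (k : ℝ) + 1) * esymm n (k - 1) lam * esymm n l lam := by
  obtain ⟨l, rfl⟩ := Nat.exists_eq_add_of_le' hl
  obtain ⟨k, rfl⟩ : ∃ k', k = k' + 1 := ⟨k - 1, by omega⟩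
  set s := Finset.univ.val.map lam
  have hcard : Multiset.card s = n := by simp [s]
  have hesymm (m : ℕ) : esymm n m lam = s.esymm m := (Finset.esymm_map_val lam _ m).symm
  have hpos (j : ℕ) (hj : j ≤ k) : 0 < s.esymmMean j := by
    rcases j with _ | j
    · simp [Multiset.esymmMean_zero]
    · rw [Multiset.esymmMean, ← hesymm]
      exact div_pos (hlam _ (by omega) (by omega)) (by exact_mod_cast Nat.choose_pos (by omega))
  have hmean := mul_le_mul_of_logConcave hpos
    (fun j hj => s.esymmMean_mul_esymmMean_le_sq (by omega)) (by omega : l ≤ k)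
  have hesymm_le := Multiset.succ_mul_esymm_mul_esymm_le (by omega) (by omega) hmean
  simp only [Nat.add_sub_cancel, hesymm, hcard] at hesymm_le ⊢
  push_cast
  linarith

theorem stmt1 (n k l : ℕ) (hn : 1 ≤ n) (hl : 1 ≤ l) (hlk : l < k) (hkn : k ≤ n)
    (lam : Fin n → ℝ) (hlam : lam ∈ GammaK n k) :
    (k : ℝ) * ((n : ℝ) - (l : ℝ) + 1) * esymm n k lam * esymm n (l - 1) lam
      ≤ (l : ℝ) * ((n : ℝ) - (k : ℝ) + 1) * esymm n (k - 1) lam * esymm n l lam :=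
  stmt1_general n k l hl hlk hkn lam hlam
end

section
/- Let 1 ≤ k ≤ n. There exists a constant c > 0 depending only on n and k such that: for every λ = (λ₁,…,λₙ) ∈ Γ_k ordered increasingly as λ₁ ≤ λ₂ ≤ ⋯ ≤ λₙ, one has λ_{n−k+1} > 0 and σ_{k−1}(λ | n−k+1) ≥ c · σ_{k−1}(λ). -/
/-!
For a real-rooted polynomial `p = c ∏ (X - r)`, the identity `p'² - p p'' = Σ_r (p / (X - r))²`
gives Newton's inequality `p(x) p''(x) < p'(x)²` at every `x` that is not a root, so a root of `p'`
that is not a root of `p` is simple, while each differentiation lowers the multiplicity of a root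
of `p` by one. The `(n - k)`-th derivative of `∏ (X + λ_i)` is real-rooted, and its
coefficients of `1, X, X²` are positive multiples of `σ_k, σ_{k-1}, σ_{k-2}`. Hence
`σ_{k-1} = 0 ≤ σ_{k-2}` forces `σ_k ≤ 0`, which is what makes deleting an entry map `Γ_k`
into `Γ_{k-1}`; and `σ_{k-1} = σ_k = 0` forces `λ` to have at least `n - k + 2` zero entries.

The estimate is proved by induction on `k`, with `t = λ_{i₀}` a `k`-th largest entry and `s` the
largest one. If `s > 2t`, expanding `σ_{k-1}` in the entries `t` and `s` reduces it to the estimate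
for `Γ_{k-1}` applied to `λ` with `s` deleted. If `s ≤ 2t`, normalise `t = 1`: such `λ` form a
bounded set, on whose closure `σ_{k-1}(λ|i₀)` cannot vanish by the statement about zero entries,
so compactness gives a positive lower bound.
-/

open Finset Polynomial

namespace Polynomial

theorem wronskian_derivative_mul {R : Type*} [CommRing R] (f g : R[X]) :
    wronskian (derivative (f * g)) (f * g) =
      g ^ 2 * wronskian (derivative f) f + f ^ 2 * wronskian (derivative g) g := by
  simp only [wronskian, derivative_mul, derivative_add]
  ring

theorem splits_derivative {p : ℝ[X]} (hp : p.Splits) : (derivative p).Splits := by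
  rw [splits_iff_card_roots] at hp ⊢
  have := card_roots_le_derivative p
  have := card_roots' (derivative p)
  have := natDegree_derivative_le p
  omega

theorem splits_iterate_derivative {p : ℝ[X]} (hp : p.Splits) (j : ℕ) :
    (derivative^[j] p).Splits := by
  induction j with
  | zero => exact hp
  | succ j ih => rw [Function.iterate_succ_apply']; exact splits_derivative ih

theorem Splits.eval_wronskian_derivative_nonneg {p : ℝ[X]} (hp : p.Splits) (x : ℝ) :
    0 ≤ (wronskian (derivative p) p).eval x := by
  induction hp using Submonoid.closure_induction with
  | mem f hf => rcases hf with ⟨a, rfl⟩ | ⟨a, rfl⟩ <;> simp [wronskian]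
  | one => simp [wronskian]
  | mul f g _ _ hf hg =>
    rw [wronskian_derivative_mul]
    simp only [eval_add, eval_mul, eval_pow]
    positivity

theorem Splits.eval_mul_eval_derivative_derivative_lt {p : ℝ[X]} (hp : p.Splits)
    (hdeg : 0 < p.natDegree) {x : ℝ} (hx : p.eval x ≠ 0) :
    p.eval x * (derivative (derivative p)).eval x < (derivative p).eval x ^ 2 := by
  obtain ⟨r, hr⟩ := hp.exists_eval_eq_zero (degree_ne_of_natDegree_ne hdeg.ne')
  obtain ⟨q, hpq⟩ : X - C r ∣ p := dvd_iff_isRoot.2 hr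
  have hq : q.Splits := hp.of_dvd (ne_zero_of_natDegree_gt hdeg) (hpq ▸ dvd_mul_left q _)
  have hqx : q.eval x ≠ 0 := by rintro h; simp [hpq, h] at hx
  have hW : 0 < (wronskian (derivative p) p).eval x := by
    have hlin : wronskian (derivative (X - C r)) (X - C r) = 1 := by simp [wronskian]
    rw [hpq, wronskian_derivative_mul, hlin, mul_one, eval_add, eval_mul, eval_pow, eval_pow]
    exact add_pos_of_pos_of_nonneg (by positivity)
      (mul_nonneg (sq_nonneg _) (hq.eval_wronskian_derivative_nonneg x))
  simp only [wronskian, eval_sub, eval_mul] at hW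
  linarith

theorem Splits.rootMultiplicity_derivative_le_one {p : ℝ[X]} (hp : p.Splits) {x : ℝ}
    (hx : ¬ p.IsRoot x) : (derivative p).rootMultiplicity x ≤ 1 := by
  by_contra! h
  have h₁ : (derivative p).IsRoot x := (rootMultiplicity_pos'.1 (by omega)).2
  have h₂ : (derivative (derivative p)).IsRoot x := by
    refine (rootMultiplicity_pos'.1 ?_).2
    rw [derivative_rootMultiplicity_of_root h₁]
    omega
  have hdeg : 0 < p.natDegree := by
    by_contra! h₀
    rw [derivative_of_natDegree_zero (by omega), rootMultiplicity_zero] at h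
    omega
  have := hp.eval_mul_eval_derivative_derivative_lt hdeg hx
  rw [h₁.eq_zero, h₂.eq_zero] at this
  simp at this

theorem Splits.add_two_le_rootMultiplicity {p : ℝ[X]} (hp : p.Splits) {x : ℝ} {j : ℕ}
    (h : 2 ≤ (derivative^[j] p).rootMultiplicity x) : j + 2 ≤ p.rootMultiplicity x := by
  induction j generalizing p with
  | zero => simpa using h
  | succ j ih =>
    rw [Function.iterate_succ_apply] at h
    have h' := ih (splits_derivative hp) h
    have hroot : p.IsRoot x := by
      by_contra hx
      have := hp.rootMultiplicity_derivative_le_one hx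
      omega
    rw [derivative_rootMultiplicity_of_root hroot] at h'
    omega

end Polynomial

theorem Multiset.esymm_cons_succ_s2 {R : Type*} [CommSemiring R] (a : R) (s : Multiset R) (m : ℕ) :
    (a ::ₘ s).esymm (m + 1) = s.esymm (m + 1) + a * s.esymm m := by
  simp only [Multiset.esymm, Multiset.powersetCard_cons, Multiset.map_add, Multiset.sum_add,
    Multiset.map_map, Function.comp_def, Multiset.prod_cons, Multiset.sum_map_mul_left]

section

variable {n : ℕ}

theorem esymm_eq_multiset_esymm (m : ℕ) (lam : Fin n → ℝ) :
    esymm n m lam = (univ.val.map lam).esymm m :=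
  (Finset.esymm_map_val lam univ m).symm

@[simp]
theorem esymm_zero (lam : Fin n → ℝ) : esymm n 0 lam = 1 := by
  simp [esymm]

theorem esymm_one (lam : Fin n → ℝ) : esymm n 1 lam = ∑ i, lam i := by
  simp [esymm, powersetCard_one]

theorem esymm_eq_zero_of_lt {m : ℕ} (h : n < m) (lam : Fin n → ℝ) : esymm n m lam = 0 := by
  rw [esymm, powersetCard_eq_empty.2 (by simpa using h), sum_empty]

@[simp]
theorem esymmPred_succ (m : ℕ) (lam : Fin n → ℝ) :
    esymmPred n (m + 1) lam = esymm n m lam := by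
  simp [esymmPred]

theorem esymm_eq_esymm_update_add (m : ℕ) (lam : Fin n → ℝ) (i : Fin n) :
    esymm n m lam =
      esymm n m (Function.update lam i 0) + lam i * esymmPred n m (Function.update lam i 0) := by
  cases m with
  | zero => simp [esymmPred]
  | succ m =>
    have huniv : (univ : Finset (Fin n)).val = i ::ₘ (univ.erase i).val := by
      rw [erase_val, Multiset.cons_erase (mem_univ_val i)]
    have hrest : (univ.erase i).val.map (Function.update lam i 0) = (univ.erase i).val.map lam :=
      Multiset.map_congr rfl fun j hj => Function.update_of_ne (ne_of_mem_erase (s := univ) hj) _ _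
    simp only [esymmPred_succ, esymm_eq_multiset_esymm, huniv, Multiset.map_cons,
      Function.update_self, hrest, Multiset.esymm_cons_succ_s2]
    cases m <;> simp [Multiset.esymm]

theorem esymm_smul (m : ℕ) (c : ℝ) (lam : Fin n → ℝ) :
    esymm n m (c • lam) = c ^ m * esymm n m lam := by
  simp only [esymm, mul_sum]
  refine sum_congr rfl fun s hs => ?_
  simp [prod_mul_distrib, (mem_powersetCard.1 hs).2]

theorem abs_esymm_le {M : ℝ} (m : ℕ) {lam : Fin n → ℝ} (hM : ∀ i, |lam i| ≤ M) :
    |esymm n m lam| ≤ n.choose m * M ^ m := by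
  calc |esymm n m lam| ≤ ∑ s ∈ univ.powersetCard m, ∏ i ∈ s, |lam i| := by
        simpa only [esymm, abs_prod] using abs_sum_le_sum_abs (fun s => ∏ i ∈ s, lam i) _
    _ ≤ ∑ s ∈ univ.powersetCard m, M ^ m := by
        refine sum_le_sum fun s hs => ?_
        rw [← (mem_powersetCard.1 hs).2, ← prod_const]
        exact prod_le_prod (fun i _ => abs_nonneg _) fun i _ => hM i
    _ = n.choose m * M ^ m := by simp

theorem continuous_esymm (m : ℕ) : Continuous (esymm n m) := by
  unfold esymm
  fun_prop

noncomputable def vietaPoly (lam : Fin n → ℝ) : ℝ[X] :=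
  ∏ i, (X + C (lam i))

theorem splits_vietaPoly (lam : Fin n → ℝ) : (vietaPoly lam).Splits :=
  Splits.prod fun i _ => Splits.X_add_C (lam i)

theorem cast_descFactorial_add_pos (m j : ℕ) : (0 : ℝ) < (m + j).descFactorial j := by
  exact_mod_cast Nat.descFactorial_pos.2 (Nat.le_add_left j m)

theorem coeff_iterate_derivative_vietaPoly {k m : ℕ} (hkn : k ≤ n) (hmk : m ≤ k)
    (lam : Fin n → ℝ) :
    (derivative^[n - k] (vietaPoly lam)).coeff m =
      (m + (n - k)).descFactorial (n - k) * esymm n (k - m) lam := by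
  rw [coeff_iterate_derivative, vietaPoly, prod_X_add_C_coeff _ _ (by simp; omega), nsmul_eq_mul]
  simp only [card_univ, Fintype.card_fin, esymm]
  congr 3
  omega

theorem rootMultiplicity_zero_vietaPoly (lam : Fin n → ℝ) :
    (vietaPoly lam).rootMultiplicity 0 = #{i | lam i = 0} := by
  have : vietaPoly lam = ((univ.val.map fun i => -lam i).map fun a => X - C a).prod := by
    simp [vietaPoly, Finset.prod, Function.comp_def, sub_eq_add_neg]
  rw [← count_roots, this, roots_multiset_prod_X_sub_C, Multiset.count_map]
  simp [eq_comm, Finset.card, Finset.filter_val]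

theorem esymm_add_two_nonpos_of_esymm_succ_eq_zero {k : ℕ} {lam : Fin n → ℝ}
    (h : esymm n (k + 1) lam = 0) (h' : 0 ≤ esymm n k lam) : esymm n (k + 2) lam ≤ 0 := by
  rcases lt_or_ge n (k + 2) with hn | hkn
  · exact (esymm_eq_zero_of_lt hn lam).le
  by_contra! hpos
  set Q := derivative^[n - (k + 2)] (vietaPoly lam)
  have hcoeff (m : ℕ) (hm : m ≤ k + 2) := coeff_iterate_derivative_vietaPoly hkn hm lam
  have hdeg : 0 < Q.natDegree := by
    refine lt_of_lt_of_le (Nat.succ_pos _) (le_natDegree_of_ne_zero (n := k + 2) ?_)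
    rw [hcoeff _ le_rfl, Nat.sub_self, esymm_zero, mul_one]
    exact (cast_descFactorial_add_pos _ _).ne'
  have hQ0 : Q.eval 0 ≠ 0 := by
    rw [← coeff_zero_eq_eval_zero, hcoeff 0 (by omega)]
    exact mul_ne_zero (cast_descFactorial_add_pos _ _).ne' hpos.ne'
  have hQ := splits_iterate_derivative (splits_vietaPoly lam) (n - (k + 2))
  have hnewton := hQ.eval_mul_eval_derivative_derivative_lt hdeg hQ0
  simp only [← coeff_zero_eq_eval_zero, coeff_derivative, hcoeff 0 (by omega),
    hcoeff 1 (by omega), hcoeff 2 (by omega)] at hnewton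
  rw [show k + 2 - 1 = k + 1 by omega, h, Nat.add_sub_cancel] at hnewton
  norm_num at hnewton
  have h₀ := cast_descFactorial_add_pos 0 (n - (k + 2))
  have h₂ := cast_descFactorial_add_pos 2 (n - (k + 2))
  rw [zero_add] at h₀
  exact hnewton.not_ge (by positivity)

theorem card_filter_ne_zero_lt_of_esymm_eq_zero {k : ℕ} {lam : Fin n → ℝ} (hkn : k + 1 ≤ n)
    (h₀ : esymm n k lam = 0) (h₁ : esymm n (k + 1) lam = 0) : #{i | lam i ≠ 0} < k := by
  set Q := derivative^[n - (k + 1)] (vietaPoly lam)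
  have hcoeff (m : ℕ) (hm : m ≤ k + 1) := coeff_iterate_derivative_vietaPoly hkn hm lam
  have hlead : Q.coeff (k + 1) ≠ 0 := by
    rw [hcoeff _ le_rfl, Nat.sub_self, esymm_zero, mul_one]
    exact (cast_descFactorial_add_pos _ _).ne'
  have hQ : Q ≠ 0 := fun h => hlead (by rw [h, coeff_zero])
  have h2 : 2 ≤ Q.rootMultiplicity 0 := by
    rw [le_rootMultiplicity_iff hQ, map_zero, sub_zero, X_pow_dvd_iff]
    intro d hd
    interval_cases d
    · rw [hcoeff 0 (by omega), Nat.sub_zero, h₁, mul_zero]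
    · rw [hcoeff 1 (by omega), Nat.add_sub_cancel, h₀, mul_zero]
  have hzero := (splits_vietaPoly lam).add_two_le_rootMultiplicity h2
  rw [rootMultiplicity_zero_vietaPoly] at hzero
  have hcard := card_filter_add_card_filter_not (s := univ) (fun i => lam i = 0)
  simp only [card_univ, Fintype.card_fin, ← ne_eq] at hcard
  omega

theorem gammaK_antitone : Antitone (GammaK n) :=
  fun _ _ hjk _ h m hm hmk => h m hm (hmk.trans hjk)

theorem esymm_pos_of_mem_gammaK {k j : ℕ} {lam : Fin n → ℝ} (h : lam ∈ GammaK n k)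
    (hj : j ≤ k) : 0 < esymm n j lam := by
  rcases j.eq_zero_or_pos with rfl | hj0
  · simp
  · exact h j hj0 hj

theorem esymmPred_nonneg_of_mem_gammaK {k j : ℕ} {lam : Fin n → ℝ} (h : lam ∈ GammaK n k)
    (hj : j ≤ k + 1) : 0 ≤ esymmPred n j lam := by
  cases j with
  | zero => simp [esymmPred]
  | succ j => rw [esymmPred_succ]; exact (esymm_pos_of_mem_gammaK h (by omega)).le

theorem smul_mem_gammaK {k : ℕ} {lam : Fin n → ℝ} (h : lam ∈ GammaK n k) {c : ℝ}
    (hc : 0 < c) :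
    c • lam ∈ GammaK n k := fun j hj hjk => by
  rw [esymm_smul]
  exact mul_pos (pow_pos hc j) (h j hj hjk)

/-- If `σ_{k+1}(λ|i) ≤ 0`, lowering `λ_i` to the zero `t` of `t ↦ σ_{k+1}(λ|i) + t σ_k(λ|i)`
keeps `σ_{k+2}` positive while `σ_{k+1}` vanishes, contradicting Newton's inequality. -/
theorem esymm_update_pos {k : ℕ} {lam : Fin n → ℝ} {i : Fin n} (h : lam ∈ GammaK n (k + 2))
    (hν : Function.update lam i 0 ∈ GammaK n k) :
    0 < esymm n (k + 1) (Function.update lam i 0) := by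
  set ν := Function.update lam i 0
  by_contra! hle
  have hs : 0 < esymm n k ν := esymm_pos_of_mem_gammaK hν le_rfl
  set t := -esymm n (k + 1) ν / esymm n k ν
  have ht : t * esymm n k ν = -esymm n (k + 1) ν := div_mul_cancel₀ _ hs.ne'
  have ht₀ : 0 ≤ t := div_nonneg (neg_nonneg.2 hle) hs.le
  have hy (m : ℕ) :
      esymm n m (Function.update lam i t) = esymm n m ν + t * esymmPred n m ν := by
    rw [esymm_eq_esymm_update_add m _ i, Function.update_idem, Function.update_self]
  have hlam (m : ℕ) : esymm n m lam = esymm n m ν + lam i * esymmPred n m ν :=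
    esymm_eq_esymm_update_add m lam i
  have hy₁ : esymm n (k + 1) (Function.update lam i t) = 0 := by
    rw [hy, esymmPred_succ, ht, add_neg_cancel]
  have hy₀ : 0 ≤ esymm n k (Function.update lam i t) := by
    rw [hy]
    exact add_nonneg hs.le (mul_nonneg ht₀ (esymmPred_nonneg_of_mem_gammaK hν (by omega)))
  have hti : t < lam i := by
    have := h (k + 1) (by omega) (by omega)
    rw [hlam, esymmPred_succ] at this
    exact lt_of_mul_lt_mul_right (by linarith) hs.le
  have hy₂ : 0 < esymm n (k + 2) (Function.update lam i t) := by
    have := h (k + 2) (by omega) le_rfl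
    rw [hlam, esymmPred_succ] at this
    rw [hy, esymmPred_succ]
    nlinarith
  exact hy₂.not_ge (esymm_add_two_nonpos_of_esymm_succ_eq_zero hy₁ hy₀)

theorem update_mem_gammaK {k : ℕ} {lam : Fin n → ℝ} (h : lam ∈ GammaK n k) (i : Fin n) :
    Function.update lam i 0 ∈ GammaK n (k - 1) := by
  induction k with
  | zero => intro j hj hjk; omega
  | succ k ih =>
    have hν := ih (gammaK_antitone k.le_succ h)
    intro j hj hjk
    rcases (by omega : j < k ∨ j = k) with hjk' | rfl
    · exact hν j hj (by omega)
    · obtain ⟨j, rfl⟩ := Nat.exists_eq_add_one.2 hj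
      exact esymm_update_pos h hν

theorem piecewise_zero_mem_gammaK {k : ℕ} {lam : Fin n → ℝ} (h : lam ∈ GammaK n k)
    (S : Finset (Fin n)) : S.piecewise 0 lam ∈ GammaK n (k - #S) := by
  induction S using Finset.induction_on with
  | empty => simpa
  | insert a S ha ih =>
    rw [piecewise_insert, card_insert_of_notMem ha, Pi.zero_apply, ← Nat.sub_sub]
    exact update_mem_gammaK ih a

end

structure IsKthLargest {n : ℕ} (k : ℕ) (lam : Fin n → ℝ) (i₀ : Fin n)
    (W : Finset (Fin n)) : Prop where
  notMem : i₀ ∉ W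
  card_eq : #W = k - 1
  le_of_mem : ∀ w ∈ W, lam i₀ ≤ lam w
  le_of_notMem : ∀ i ∉ W, lam i ≤ lam i₀

namespace IsKthLargest

variable {n k : ℕ} {lam : Fin n → ℝ} {i₀ : Fin n} {W : Finset (Fin n)}

theorem smul (hW : IsKthLargest k lam i₀ W) {c : ℝ} (hc : 0 ≤ c) :
    IsKthLargest k (c • lam) i₀ W where
  notMem := hW.notMem
  card_eq := hW.card_eq
  le_of_mem w hw := mul_le_mul_of_nonneg_left (hW.le_of_mem w hw) hc
  le_of_notMem i hi := mul_le_mul_of_nonneg_left (hW.le_of_notMem i hi) hc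

theorem update_erase (hW : IsKthLargest k lam i₀ W) {m : Fin n} (hm : m ∈ W)
    (h₀ : 0 ≤ lam i₀) : IsKthLargest (k - 1) (Function.update lam m 0) i₀ (W.erase m) where
  notMem h := hW.notMem (mem_of_mem_erase h)
  card_eq := by rw [card_erase_of_mem hm, hW.card_eq]
  le_of_mem w hw := by
    rw [Function.update_of_ne (ne_of_mem_of_not_mem hm hW.notMem).symm,
      Function.update_of_ne (ne_of_mem_erase hw)]
    exact hW.le_of_mem w (mem_of_mem_erase hw)
  le_of_notMem i hi := by
    rw [Function.update_of_ne (ne_of_mem_of_not_mem hm hW.notMem).symm]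
    by_cases him : i = m
    · rwa [him, Function.update_self]
    · rw [Function.update_of_ne him]
      exact hW.le_of_notMem i fun hiW => hi (mem_erase.2 ⟨him, hiW⟩)

theorem sum_compl_pos (hW : IsKthLargest k lam i₀ W) (hk : 1 ≤ k) (h : lam ∈ GammaK n k) :
    0 < ∑ i ∈ Wᶜ, lam i := by
  have := piecewise_zero_mem_gammaK h W 1 le_rfl (by rw [hW.card_eq]; omega)
  simpa [esymm_one, sum_piecewise, compl_eq_univ_sdiff] using this

theorem pos (hW : IsKthLargest k lam i₀ W) (hk : 1 ≤ k) (h : lam ∈ GammaK n k) :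
    0 < lam i₀ := by
  by_contra! h₀
  exact (hW.sum_compl_pos hk h).not_ge
    (sum_nonpos fun i hi => (hW.le_of_notMem i (mem_compl.1 hi)).trans h₀)

theorem neg_mul_le (hW : IsKthLargest k lam i₀ W) (hk : 1 ≤ k) (h : lam ∈ GammaK n k)
    (i : Fin n) : -(n * lam i₀) ≤ lam i := by
  have ht := hW.pos hk h
  by_cases hiW : i ∈ W
  · nlinarith [hW.le_of_mem i hiW]
  · have hsum := hW.sum_compl_pos hk h
    rw [← add_sum_erase _ _ (mem_compl.2 hiW)] at hsum
    have hrest : ∑ j ∈ Wᶜ.erase i, lam j ≤ n * lam i₀ :=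
      calc ∑ j ∈ Wᶜ.erase i, lam j ≤ #(Wᶜ.erase i) * lam i₀ := by
            simpa using sum_le_card_nsmul _ _ _
              fun j hj => hW.le_of_notMem j (mem_compl.1 (mem_of_mem_erase hj))
        _ ≤ n * lam i₀ := by
            gcongr
            simpa using card_le_univ (Wᶜ.erase i)
    linarith

theorem esymm_le_of_le_two_mul (hW : IsKthLargest k lam i₀ W) (hk : 1 ≤ k)
    (h : lam ∈ GammaK n k) (h₂ : ∀ w ∈ W, lam w ≤ 2 * lam i₀) (m : ℕ) :
    esymm n m lam ≤ n.choose m * (2 * n) ^ m * lam i₀ ^ m := by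
  have ht := hW.pos hk h
  have habs (i : Fin n) : |lam i| ≤ 2 * n * lam i₀ := by
    have hn : (1 : ℝ) ≤ n := by exact_mod_cast i.pos
    have hup : lam i ≤ 2 * lam i₀ := by
      by_cases hiW : i ∈ W
      · exact h₂ i hiW
      · linarith [hW.le_of_notMem i hiW]
    rw [abs_le]
    constructor <;> nlinarith [hW.neg_mul_le hk h i]
  calc esymm n m lam ≤ |esymm n m lam| := le_abs_self _
    _ ≤ n.choose m * (2 * n * lam i₀) ^ m := abs_esymm_le m habs
    _ = n.choose m * (2 * n) ^ m * lam i₀ ^ m := by ring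

end IsKthLargest

section estimate

variable {n : ℕ}

theorem esymm_update_pos_of_nonneg {k : ℕ} {μ : Fin n → ℝ} {i₀ : Fin n}
    {W : Finset (Fin n)} (hkn : k + 2 ≤ n) (hW : #W = k + 1)
    (hW₀ : ∀ w ∈ W, Function.update μ i₀ 0 w ≠ 0)
    (hμ : 0 ≤ esymm n (k + 2) μ) (hν₁ : 0 ≤ esymm n (k + 1) (Function.update μ i₀ 0))
    (hν₀ : 0 ≤ esymm n k (Function.update μ i₀ 0)) :
    0 < esymm n (k + 1) (Function.update μ i₀ 0) := by
  set ν := Function.update μ i₀ 0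
  refine hν₁.lt_of_ne' fun h₁ => ?_
  have h₂ : esymm n (k + 2) ν = 0 := by
    refine le_antisymm (esymm_add_two_nonpos_of_esymm_succ_eq_zero h₁ hν₀) ?_
    rwa [esymm_eq_esymm_update_add _ μ i₀, esymmPred_succ, h₁, mul_zero, add_zero] at hμ
  have hlt := card_filter_ne_zero_lt_of_esymm_eq_zero hkn h₁ h₂
  have hle : #W ≤ #{i | ν i ≠ 0} := card_le_card fun w hw => by simpa using hW₀ w hw
  omega

theorem exists_pos_le_esymm_update_of_apply_eq_one {k : ℕ} (hkn : k + 2 ≤ n) (i₀ : Fin n)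
    (W : Finset (Fin n)) :
    ∃ c > 0, ∀ μ ∈ GammaK n (k + 2), IsKthLargest (k + 2) μ i₀ W → μ i₀ = 1 →
      (∀ w ∈ W, μ w ≤ 2) → c ≤ esymm n (k + 1) (Function.update μ i₀ 0) := by
  set T := {μ | μ ∈ GammaK n (k + 2) ∧ IsKthLargest (k + 2) μ i₀ W ∧ μ i₀ = 1 ∧
    ∀ w ∈ W, μ w ≤ 2}
  rcases T.eq_empty_or_nonempty with hT | hT
  · exact ⟨1, one_pos, fun μ h hW h₁ h₂ =>
      absurd ⟨h, hW, h₁, h₂⟩ (hT ▸ Set.notMem_empty μ)⟩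
  have hbdd : Bornology.IsBounded T := by
    refine (Metric.isBounded_closedBall (x := 0) (r := 2 * n)).subset
      fun μ ⟨h, hW, h₁, h₂⟩ => ?_
    rw [mem_closedBall_zero_iff, pi_norm_le_iff_of_nonneg (by positivity)]
    intro i
    rw [Real.norm_eq_abs, abs_le]
    have hn : (1 : ℝ) ≤ n := by exact_mod_cast i.pos
    have := hW.neg_mul_le (by omega) h i
    by_cases hiW : i ∈ W
    · constructor <;> nlinarith [h₂ i hiW]
    · constructor <;> nlinarith [hW.le_of_notMem i hiW]
  have hupdate : Continuous fun μ : Fin n → ℝ => Function.update μ i₀ 0 :=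
    continuous_id.update i₀ continuous_const
  obtain ⟨μ, hμ, hmin⟩ := hbdd.isCompact_closure.exists_isMinOn hT.closure
    ((continuous_esymm _).comp hupdate).continuousOn
  have hcl {g : (Fin n → ℝ) → ℝ} (hg : Continuous g) (hgT : ∀ μ ∈ T, 0 ≤ g μ) : 0 ≤ g μ :=
    closure_minimal hgT (isClosed_le continuous_const hg) hμ
  refine ⟨_, ?_, fun μ h hW h₁ h₂ => hmin (subset_closure ⟨h, hW, h₁, h₂⟩)⟩
  obtain ⟨μ₁, -, hμ₁W, -⟩ := hT
  refine esymm_update_pos_of_nonneg hkn (by rw [hμ₁W.card_eq]; rfl) (fun w hw => ?_) ?_ ?_ ?_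
  · rw [Function.update_of_ne (ne_of_mem_of_not_mem hw hμ₁W.notMem)]
    have := hcl (g := (· w - 1)) (by fun_prop)
      fun μ ⟨_, hW, h₁, _⟩ => sub_nonneg.2 (h₁ ▸ hW.le_of_mem w hw)
    linarith
  · exact hcl (continuous_esymm _) fun μ ⟨h, _⟩ => (h _ (by omega) le_rfl).le
  · exact hcl ((continuous_esymm _).comp hupdate)
      fun μ ⟨h, _⟩ => (update_mem_gammaK h i₀ _ (by omega) le_rfl).le
  · exact hcl ((continuous_esymm _).comp hupdate)
      fun μ ⟨h, _⟩ => (esymm_pos_of_mem_gammaK (update_mem_gammaK h i₀) (by omega)).le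

theorem exists_pos_mul_pow_le_esymm_update {k : ℕ} (hkn : k + 2 ≤ n) :
    ∃ c > 0, ∀ (lam : Fin n → ℝ) (i₀ : Fin n) (W : Finset (Fin n)),
      lam ∈ GammaK n (k + 2) → IsKthLargest (k + 2) lam i₀ W → (∀ w ∈ W, lam w ≤ 2 * lam i₀) →
        c * lam i₀ ^ (k + 1) ≤ esymm n (k + 1) (Function.update lam i₀ 0) := by
  choose c hc H using fun p : Fin n × Finset (Fin n) =>
    exists_pos_le_esymm_update_of_apply_eq_one hkn p.1 p.2
  have : Nonempty (Fin n) := ⟨⟨0, by omega⟩⟩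
  obtain ⟨p₀, hp₀⟩ := Finite.exists_min c
  refine ⟨c p₀, hc p₀, fun lam i₀ W h hW h₂ => ?_⟩
  have ht := hW.pos (by omega) h
  have hμ := H (i₀, W) ((lam i₀)⁻¹ • lam) (smul_mem_gammaK h (inv_pos.2 ht))
    (hW.smul (inv_nonneg.2 ht.le)) (inv_mul_cancel₀ ht.ne')
    fun w hw => by rw [Pi.smul_apply, smul_eq_mul, inv_mul_le_iff₀ ht, mul_comm]; exact h₂ w hw
  dsimp only at hμ
  rw [← smul_zero (lam i₀)⁻¹, Function.update_smul, esymm_smul, inv_pow,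
    le_inv_mul_iff₀ (by positivity)] at hμ
  calc c p₀ * lam i₀ ^ (k + 1) ≤ c (i₀, W) * lam i₀ ^ (k + 1) := by gcongr; exact hp₀ _
    _ ≤ _ := by linarith

theorem esymm_le_mul_esymm_update_of_lt {k : ℕ} {c : ℝ} (hc : 0 < c)
    (IH : ∀ (lam : Fin n → ℝ) (i₀ : Fin n) (W : Finset (Fin n)),
      lam ∈ GammaK n (k + 1) → IsKthLargest (k + 1) lam i₀ W →
        c * esymm n k lam ≤ esymm n k (Function.update lam i₀ 0))
    {lam : Fin n → ℝ} {i₀ : Fin n} {W : Finset (Fin n)} (h : lam ∈ GammaK n (k + 2))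
    (hW : IsKthLargest (k + 2) lam i₀ W) {m : Fin n} (hm : m ∈ W) (hlt : 2 * lam i₀ < lam m) :
    esymm n (k + 1) lam ≤ (2 + 2 / c) * esymm n (k + 1) (Function.update lam i₀ 0) := by
  have hmi₀ : m ≠ i₀ := ne_of_mem_of_not_mem hm hW.notMem
  set t := lam i₀
  set s := lam m
  set ν := Function.update lam i₀ 0
  set ρ := Function.update lam m 0
  set D := Function.update ρ i₀ 0
  have ht : 0 < t := hW.pos (by omega) h
  have hρ : ρ ∈ GammaK n (k + 1) := update_mem_gammaK h m
  have hD : D ∈ GammaK n k := update_mem_gammaK hρ i₀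
  have hνm : Function.update ν m 0 = D := Function.update_comm hmi₀.symm _ _ _
  have ha : 0 < esymm n k D := esymm_pos_of_mem_gammaK hD le_rfl
  have hb : 0 ≤ esymmPred n k D := esymmPred_nonneg_of_mem_gammaK hD (by omega)
  have hlam := esymm_eq_esymm_update_add (k + 1) lam i₀
  have hν₁ := esymm_eq_esymm_update_add (k + 1) ν m
  have hν₀ := esymm_eq_esymm_update_add k ν m
  have hρ₁ := esymm_eq_esymm_update_add (k + 1) ρ i₀
  have hρ₀ := esymm_eq_esymm_update_add k ρ i₀
  rw [hνm, show ν m = s from Function.update_of_ne hmi₀ _ _] at hν₁ hν₀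
  rw [show ρ i₀ = t from Function.update_of_ne hmi₀.symm _ _] at hρ₁ hρ₀
  rw [esymmPred_succ] at hlam hν₁ hρ₁
  have hsa : s * esymm n k D ≤ 2 * esymm n (k + 1) ν := by
    have := esymm_pos_of_mem_gammaK hρ (le_refl (k + 1))
    nlinarith
  have htb : t * esymmPred n k D ≤ esymm n k D / c := by
    have := IH ρ i₀ (W.erase m) hρ (hW.update_erase hm ht.le)
    rw [le_div_iff₀ hc]
    nlinarith
  calc esymm n (k + 1) lam
      = esymm n (k + 1) ν + t * esymm n k D + s * (t * esymmPred n k D) := by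
        rw [hlam, hν₀]; ring
    _ ≤ esymm n (k + 1) ν + s * esymm n k D / 2 + s * (esymm n k D / c) := by
        gcongr
        · nlinarith
        · linarith
    _ = esymm n (k + 1) ν + (1 / 2 + 1 / c) * (s * esymm n k D) := by ring
    _ ≤ esymm n (k + 1) ν + (1 / 2 + 1 / c) * (2 * esymm n (k + 1) ν) := by gcongr
    _ = (2 + 2 / c) * esymm n (k + 1) ν := by ring

theorem exists_pos_mul_esymm_le_esymm_update {k : ℕ} (hk : 1 ≤ k) (hkn : k ≤ n) :
    ∃ c > 0, ∀ (lam : Fin n → ℝ) (i₀ : Fin n) (W : Finset (Fin n)), lam ∈ GammaK n k →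
      IsKthLargest k lam i₀ W →
        c * esymm n (k - 1) lam ≤ esymm n (k - 1) (Function.update lam i₀ 0) := by
  induction k, hk using Nat.le_induction with
  | base => exact ⟨1, one_pos, by simp⟩
  | succ k hk ih =>
    obtain ⟨c, hc, IH⟩ := ih (by omega)
    obtain ⟨k, rfl⟩ := Nat.exists_eq_add_one.2 hk
    obtain ⟨c₁, hc₁, hcomp⟩ := exists_pos_mul_pow_le_esymm_update hkn
    set B : ℝ := n.choose (k + 1) * (2 * n) ^ (k + 1)
    have hB : 0 < B := by
      have : 0 < n.choose (k + 1) := Nat.choose_pos (by omega)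
      have : (0 : ℝ) < n := by exact_mod_cast (by omega : 0 < n)
      positivity
    refine ⟨min (c₁ / B) (2 + 2 / c)⁻¹, by positivity, fun lam i₀ W h hW => ?_⟩
    have hpos : 0 < esymm n (k + 1) lam := esymm_pos_of_mem_gammaK h (by omega)
    by_cases h₂ : ∀ w ∈ W, lam w ≤ 2 * lam i₀
    · calc min (c₁ / B) (2 + 2 / c)⁻¹ * esymm n (k + 1) lam
          ≤ c₁ / B * (B * lam i₀ ^ (k + 1)) := by
            gcongr
            · exact min_le_left _ _
            · exact hW.esymm_le_of_le_two_mul (by omega) h h₂ (k + 1)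
        _ = c₁ * lam i₀ ^ (k + 1) := by field_simp
        _ ≤ _ := hcomp lam i₀ W h hW h₂
    · push Not at h₂
      obtain ⟨m, hm, hlt⟩ := h₂
      calc min (c₁ / B) (2 + 2 / c)⁻¹ * esymm n (k + 1) lam
          ≤ (2 + 2 / c)⁻¹ * esymm n (k + 1) lam := by gcongr; exact min_le_right _ _
        _ ≤ _ := by
            rw [inv_mul_le_iff₀ (by positivity)]
            exact esymm_le_mul_esymm_update_of_lt hc IH h hW hm hlt

end estimate

theorem stmt2 (n k : ℕ) (hk1 : 1 ≤ k) (hkn : k ≤ n) :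
    ∃ c : ℝ, 0 < c ∧
      ∀ lam : Fin n → ℝ, lam ∈ GammaK n k → Monotone lam →
        0 < lam ⟨n - k, by omega⟩ ∧
        c * esymm n (k - 1) lam
          ≤ esymm n (k - 1) (Function.update lam ⟨n - k, by omega⟩ 0) := by
  obtain ⟨c, hc, H⟩ := exists_pos_mul_esymm_le_esymm_update hk1 hkn
  refine ⟨c, hc, fun lam h hmono => ?_⟩
  have hW : IsKthLargest k lam ⟨n - k, by omega⟩ (Ioi ⟨n - k, by omega⟩) :=
    { notMem := by simp
      card_eq := by simp; omega
      le_of_mem := fun w hw => hmono (mem_Ioi.1 hw).le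
      le_of_notMem := fun i hi => hmono (not_lt.1 (mt mem_Ioi.2 hi)) }
  exact ⟨hW.pos hk1 h, H lam _ _ h hW⟩
end
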